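/- arXiv:2011.05607 — 2 statements merged into one kernel-verified Lean document; each statement's English description precedes it below -/
import Mathlib

section
/- Let d ≥ 1 and let k be an integer with 1 ≤ k ≤ d. The facets (that is, the (d−1)-dimensional exposed faces) of the dilated polytope k·ρ_{d,k} are exactly the sets conv(G ∪ S) where, for some subset I ⊆ {1,…,d} of cardinality k and some choice of signs σ_i ∈ {−1,+1} for i ∈ I, G = {x ∈ [−1,1]^d : x_i = σ_i for all i ∈ I} is the corresponding (d−k)-dimensional face of γ_d and S is the (k−1)-dimensional regular simplex with vertex set {k σ_i e_i : i ∈ I}. -/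
open scoped Pointwise

noncomputable section

/-- The hypercube `γ_d = [-1,1]^d` in `ℝ^d`. -/
def hcube (d : ℕ) : Set (EuclideanSpace ℝ (Fin d)) := {x | ∀ i, |x i| ≤ 1}

/-- The cross-polytope `β_d = {x : ∑ |x_i| ≤ 1}` in `ℝ^d`. -/
def cross (d : ℕ) : Set (EuclideanSpace ℝ (Fin d)) := {x | ∑ i, |x i| ≤ 1}

/-- The polytope `ρ_{d,k} = conv(β_d ∪ (1/k)γ_d)`. -/
def rho (d : ℕ) (k : ℝ) : Set (EuclideanSpace ℝ (Fin d)) :=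
  convexHull ℝ (cross d ∪ (1 / k) • hcube d)

/-!
Write `P = k • ρ_{d,k} = conv (k • β_d ∪ γ_d)`. The face of `P` exposed by a linear form `⟪u, ·⟫`
with maximum `M` is the convex hull of the points of `k • β_d` and of `γ_d` at which the maximum is
attained. Those of `k • β_d` vanish at every coordinate `j` with `|u j| < ‖u‖_∞`, those of `γ_d`
satisfy `u i * x i = |u i|` for all `i`. Unless every nonzero `|u i|` equals `‖u‖_∞` and
`‖u‖_1 = k ‖u‖_∞`, these constraints provide on the face a second linear equation independent of
`⟪u, x⟫ = M`, so the face has dimension at most `d - 2`; when `‖u‖_1 = k ‖u‖_∞`, integrality of `k`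
excludes a single coordinate with `0 < |u j| < ‖u‖_∞`. In the remaining case `u` is a positive
multiple of `b = ∑_{i ∈ I} σ_i e_i` with `|I| = k`, whose face is `conv (G ∪ S)`. Its affine hull is
the hyperplane `⟪b, x⟫ = k`, because `b ∈ G` and the differences of points of `G ∪ S` include the
edge directions `e_j` (`j ∉ I`) of `G` and the vectors `k σ_i e_i - b` (`i ∈ I`), which together
with `b` span `ℝ^d`.
-/

open Set Module
open scoped RealInnerProductSpace

theorem sep_forall_le_eq_sep_eq {α : Type*} {P : Set α} {f : α → ℝ} {x₀ : α} {M : ℝ}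
    (hx₀ : x₀ ∈ P) (hfx₀ : f x₀ = M) (hf : ∀ y ∈ P, f y ≤ M) :
    {x ∈ P | ∀ y ∈ P, f y ≤ f x} = {x ∈ P | f x = M} := by
  ext x
  exact ⟨fun ⟨hx, hmax⟩ => ⟨hx, (hf x hx).antisymm (hfx₀ ▸ hmax x₀ hx₀)⟩,
    fun ⟨hx, hxM⟩ => ⟨hx, fun y hy => hxM ▸ hf y hy⟩⟩

section LevelSet

variable {E : Type*} [AddCommGroup E] [Module ℝ E]

theorem vectorSpan_convexHull (s : Set E) : vectorSpan ℝ (convexHull ℝ s) = vectorSpan ℝ s := by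
  rw [← direction_affineSpan, affineSpan_convexHull, direction_affineSpan]

theorem sep_convexHull_union_eq {A B : Set E} (hA : Convex ℝ A) (hB : Convex ℝ B)
    (hA₀ : A.Nonempty) (hB₀ : B.Nonempty) (l : E →ₗ[ℝ] ℝ) {M : ℝ} (hl : ∀ x ∈ A ∪ B, l x ≤ M) :
    {x ∈ convexHull ℝ (A ∪ B) | l x = M} = convexHull ℝ {x ∈ A ∪ B | l x = M} := by
  refine Subset.antisymm ?_ (convexHull_min (fun x hx => ⟨subset_convexHull ℝ _ hx.1, hx.2⟩)
    ((convex_convexHull ℝ _).inter (convex_hyperplane l.isLinear M)))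
  rintro x ⟨hx, hxM⟩
  rw [hA.convexHull_union hB hA₀ hB₀] at hx
  obtain ⟨a, ha, b, hb, α, β, hα, hβ, hαβ, rfl⟩ := mem_convexJoin.1 hx
  have hla := hl a (Or.inl ha)
  have hlb := hl b (Or.inr hb)
  simp only [map_add, map_smul, smul_eq_mul] at hxM
  rcases hα.eq_or_lt with rfl | hα'
  · obtain rfl : β = 1 := by linarith
    rw [zero_smul, one_smul, zero_add]
    exact subset_convexHull ℝ _ ⟨Or.inr hb, by linarith⟩
  rcases hβ.eq_or_lt with rfl | hβ'
  · obtain rfl : α = 1 := by linarith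
    rw [zero_smul, one_smul, add_zero]
    exact subset_convexHull ℝ _ ⟨Or.inl ha, by linarith⟩
  have hM : M = α * M + β * M := by rw [← add_mul, hαβ, one_mul]
  have hlaM : l a = M := by
    by_contra h
    linarith [mul_lt_mul_of_pos_left (hla.lt_of_ne h) hα', mul_le_mul_of_nonneg_left hlb hβ]
  have hlbM : l b = M := by
    by_contra h
    linarith [mul_lt_mul_of_pos_left (hlb.lt_of_ne h) hβ', mul_le_mul_of_nonneg_left hla hα]
  have hmem : ∀ y ∈ A ∪ B, l y = M → y ∈ convexHull ℝ {x ∈ A ∪ B | l x = M} :=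
    fun y hy hyM => subset_convexHull ℝ _ ⟨hy, hyM⟩
  exact convex_convexHull ℝ _ (hmem a (Or.inl ha) hlaM) (hmem b (Or.inr hb) hlbM) hα hβ hαβ

end LevelSet

section Orthogonal

variable {E : Type*} [NormedAddCommGroup E] [InnerProductSpace ℝ E] [FiniteDimensional ℝ E]

theorem finrank_vectorSpan_add_finrank_span_le {S W : Set E}
    (h : ∀ w ∈ W, ∃ c, ∀ x ∈ S, ⟪w, x⟫ = c) :
    finrank ℝ (vectorSpan ℝ S) + finrank ℝ (Submodule.span ℝ W) ≤ finrank ℝ E := by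
  have hle : vectorSpan ℝ S ≤ (Submodule.span ℝ W)ᗮ := by
    rw [vectorSpan_def]
    refine (Submodule.isOrtho_span.2 ?_).le
    rintro _ ⟨x, hx, y, hy, rfl⟩ w hw
    obtain ⟨c, hc⟩ := h w hw
    change ⟪x - y, w⟫ = 0
    rw [inner_sub_left, real_inner_comm, hc x hx, real_inner_comm, hc y hy, sub_self]
  have := Submodule.finrank_add_finrank_orthogonal (Submodule.span ℝ W)
  have := Submodule.finrank_mono hle
  omega

end Orthogonal

theorem Submodule.eq_top_of_forall_single_mem {d : ℕ} {V : Submodule ℝ (EuclideanSpace ℝ (Fin d))}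
    (h : ∀ j, EuclideanSpace.single j (1 : ℝ) ∈ V) : V = ⊤ := by
  refine eq_top_iff.2 fun x _ => ?_
  rw [← (EuclideanSpace.basisFun (Fin d) ℝ).sum_repr x]
  exact V.sum_mem fun j _ => V.smul_mem _ (by rw [EuclideanSpace.basisFun_apply]; exact h j)

theorem mul_le_of_abs_le {a b A : ℝ} (ha : |a| ≤ A) : a * b ≤ A * |b| :=
  (le_abs_self _).trans (by rw [abs_mul]; exact mul_le_mul_of_nonneg_right ha (abs_nonneg b))

theorem mul_le_abs_of_abs_le_one {a b : ℝ} (hb : |b| ≤ 1) : a * b ≤ |a| :=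
  (le_abs_self _).trans (by rw [abs_mul]; exact mul_le_of_le_one_right (abs_nonneg a) hb)

theorem abs_sign_le_one (x : ℝ) : |(SignType.sign x : ℝ)| ≤ 1 := by
  rcases lt_trichotomy x 0 with h | h | h <;> simp [h]

theorem exists_ne_ne_zero_ne_of_sum_eq_nat_mul {ι : Type*} [Fintype ι] [DecidableEq ι] {a : ι → ℝ}
    {A : ℝ} {k : ℕ} (hsum : ∑ i, a i = k * A) {j : ι} (hj : 0 < a j) (hjA : a j < A) :
    ∃ i ≠ j, a i ≠ 0 ∧ a i ≠ A := by
  by_contra! h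
  set m := ((Finset.univ.erase j).filter (a · ≠ 0)).card
  have hrest : ∑ i ∈ Finset.univ.erase j, a i = m * A := by
    rw [← Finset.sum_filter_ne_zero, Finset.sum_congr rfl fun i hi => h i
      (Finset.ne_of_mem_erase (Finset.mem_filter.1 hi).1) (Finset.mem_filter.1 hi).2,
      Finset.sum_const, nsmul_eq_mul]
  have hj' : a j = ((k : ℝ) - m) * A := by
    linarith [Finset.add_sum_erase Finset.univ a (Finset.mem_univ j)]
  have hA : 0 < A := hj.trans hjA
  have h₁ : (m : ℝ) < k := by nlinarith
  have h₂ : (k : ℝ) < m + 1 := by nlinarith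
  have : m < k := by exact_mod_cast h₁
  have : k < m + 1 := by exact_mod_cast h₂
  omega

section Polytope

variable {d : ℕ}

theorem inner_eq_sum (u x : EuclideanSpace ℝ (Fin d)) : ⟪u, x⟫ = ∑ i, u i * x i := by
  simp [PiLp.inner_apply, mul_comm]

theorem zero_mem_hcube : (0 : EuclideanSpace ℝ (Fin d)) ∈ hcube d := fun i => by simp

theorem zero_mem_cross : (0 : EuclideanSpace ℝ (Fin d)) ∈ cross d := by simp [cross]

theorem convex_hcube : Convex ℝ (hcube d) := by
  intro x hx y hy a b ha hb hab i
  calc |a * x i + b * y i| ≤ a * |x i| + b * |y i| := by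
        simpa [abs_mul, abs_of_nonneg ha, abs_of_nonneg hb] using abs_add_le (a * x i) (b * y i)
    _ ≤ a * 1 + b * 1 := by gcongr; exacts [hx i, hy i]
    _ = 1 := by linarith

theorem convex_cross : Convex ℝ (cross d) := by
  intro x hx y hy a b ha hb hab
  calc ∑ i, |a * x i + b * y i| ≤ ∑ i, (a * |x i| + b * |y i|) := by
        gcongr with i
        simpa [abs_mul, abs_of_nonneg ha, abs_of_nonneg hb] using abs_add_le (a * x i) (b * y i)
    _ = a * ∑ i, |x i| + b * ∑ i, |y i| := by
        rw [Finset.sum_add_distrib, Finset.mul_sum, Finset.mul_sum]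
    _ ≤ a * 1 + b * 1 := by gcongr; exacts [hx, hy]
    _ = 1 := by linarith

theorem smul_rho {k : ℝ} (hk : k ≠ 0) : k • rho d k = convexHull ℝ (k • cross d ∪ hcube d) := by
  rw [rho, ← convexHull_smul, smul_set_union, smul_smul, mul_one_div_cancel hk, one_smul]

theorem smul_single_mem_cross {a : ℝ} (ha : |a| ≤ 1) (i : Fin d) :
    a • EuclideanSpace.single i (1 : ℝ) ∈ cross d := by
  simpa [cross, PiLp.single_apply, apply_ite] using ha

theorem inner_le_of_mem_hcube (u : EuclideanSpace ℝ (Fin d)) {x : EuclideanSpace ℝ (Fin d)}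
    (hx : x ∈ hcube d) : ⟪u, x⟫ ≤ ∑ i, |u i| := by
  rw [inner_eq_sum]
  exact Finset.sum_le_sum fun i _ => mul_le_abs_of_abs_le_one (hx i)

theorem mul_eq_abs_of_le_inner {u x : EuclideanSpace ℝ (Fin d)} (hx : x ∈ hcube d)
    (hle : ∑ i, |u i| ≤ ⟪u, x⟫) (i : Fin d) : u i * x i = |u i| := by
  have hterm : ∀ i ∈ Finset.univ, u i * x i ≤ |u i| := fun i _ => mul_le_abs_of_abs_le_one (hx i)
  rw [inner_eq_sum] at hle
  exact (Finset.sum_eq_sum_iff_of_le hterm).1 ((Finset.sum_le_sum hterm).antisymm hle) i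
    (Finset.mem_univ i)

theorem inner_le_of_mem_cross {u c : EuclideanSpace ℝ (Fin d)} {A : ℝ} (hA₀ : 0 ≤ A)
    (hA : ∀ i, |u i| ≤ A) (hc : c ∈ cross d) : ⟪u, c⟫ ≤ A :=
  calc ⟪u, c⟫ = ∑ i, u i * c i := inner_eq_sum u c
    _ ≤ ∑ i, A * |c i| := Finset.sum_le_sum fun i _ => mul_le_of_abs_le (hA i)
    _ = A * ∑ i, |c i| := (Finset.mul_sum ..).symm
    _ ≤ A := mul_le_of_le_one_right hA₀ hc

theorem eq_zero_of_le_inner {u c : EuclideanSpace ℝ (Fin d)} {A : ℝ} (hA : ∀ i, |u i| ≤ A)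
    (hc : c ∈ cross d) (hle : A ≤ ⟪u, c⟫) {j : Fin d} (hj : |u j| < A) : c j = 0 := by
  by_contra hcj
  have hlt : ∑ i, u i * c i < ∑ i, A * |c i| := by
    refine Finset.sum_lt_sum (fun i _ => mul_le_of_abs_le (hA i)) ⟨j, Finset.mem_univ j, ?_⟩
    exact (le_abs_self _).trans_lt (by rw [abs_mul]; gcongr)
  have hA₀ : 0 ≤ A := (abs_nonneg _).trans hj.le
  have : ∑ i, A * |c i| ≤ A := by rw [← Finset.mul_sum]; exact mul_le_of_le_one_right hA₀ hc
  rw [inner_eq_sum] at hle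
  linarith

theorem inner_le_of_mem_smul_cross {u x : EuclideanSpace ℝ (Fin d)} {k A : ℝ} (hk : 0 ≤ k)
    (hA₀ : 0 ≤ A) (hA : ∀ i, |u i| ≤ A) (hx : x ∈ k • cross d) : ⟪u, x⟫ ≤ k * A := by
  obtain ⟨c, hc, rfl⟩ := hx
  rw [inner_smul_right]
  exact mul_le_mul_of_nonneg_left (inner_le_of_mem_cross hA₀ hA hc) hk

theorem eq_zero_of_mem_smul_cross {u x : EuclideanSpace ℝ (Fin d)} {k A : ℝ} (hk : 0 < k)
    (hA : ∀ i, |u i| ≤ A) (hx : x ∈ k • cross d) (hle : k * A ≤ ⟪u, x⟫) {j : Fin d}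
    (hj : |u j| < A) : x j = 0 := by
  obtain ⟨c, hc, rfl⟩ := hx
  rw [inner_smul_right] at hle
  simp [eq_zero_of_le_inner hA hc (le_of_mul_le_mul_left hle hk) hj]

theorem finrank_vectorSpan_add_two_le {S : Set (EuclideanSpace ℝ (Fin d))}
    {u w : EuclideanSpace ℝ (Fin d)} {i₀ : Fin d} (hu : u i₀ ≠ 0) (hw : w ≠ 0) (hwi₀ : w i₀ = 0)
    {a b : ℝ} (hSu : ∀ x ∈ S, ⟪u, x⟫ = a) (hSw : ∀ x ∈ S, ⟪w, x⟫ = b) :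
    finrank ℝ (vectorSpan ℝ S) + 2 ≤ d := by
  have hli : LinearIndependent ℝ ![u, w] := by
    refine LinearIndependent.pair_iff.2 fun s t hst => ?_
    obtain rfl : s = 0 := by simpa [hwi₀, hu] using congrArg (· i₀) hst
    exact ⟨rfl, by simpa [hw] using hst⟩
  have := finrank_vectorSpan_add_finrank_span_le (S := S) (W := Set.range ![u, w]) (by
    rintro _ ⟨i, rfl⟩
    fin_cases i
    exacts [⟨a, hSu⟩, ⟨b, hSw⟩])
  rwa [finrank_span_eq_card hli, Fintype.card_fin, finrank_euclideanSpace_fin] at this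

theorem finrank_vectorSpan_of_hcube_subset {S : Set (EuclideanSpace ℝ (Fin d))}
    (h : hcube d ⊆ S) : finrank ℝ (vectorSpan ℝ S) = d := by
  suffices vectorSpan ℝ S = ⊤ by rw [this, finrank_top, finrank_euclideanSpace_fin]
  refine Submodule.eq_top_of_forall_single_mem fun j => ?_
  have hj : EuclideanSpace.single j (1 : ℝ) ∈ hcube d := fun i => by
    by_cases hij : i = j <;> simp [PiLp.single_apply, hij]
  simpa using vsub_mem_vectorSpan ℝ (h hj) (h zero_mem_hcube)

end Polytope

section Facet

variable {d : ℕ} {I : Finset (Fin d)} {σ : Fin d → ℝ}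

def cubeFace (I : Finset (Fin d)) (σ : Fin d → ℝ) : Set (EuclideanSpace ℝ (Fin d)) :=
  {x ∈ hcube d | ∀ i ∈ I, x i = σ i}

def simplexVertices (k : ℝ) (I : Finset (Fin d)) (σ : Fin d → ℝ) :
    Set (EuclideanSpace ℝ (Fin d)) :=
  {p | ∃ i ∈ I, p = (k * σ i) • EuclideanSpace.single i (1 : ℝ)}

def faceNormal (I : Finset (Fin d)) (σ : Fin d → ℝ) : EuclideanSpace ℝ (Fin d) :=
  WithLp.toLp 2 fun i => if i ∈ I then σ i else 0

theorem faceNormal_apply (i : Fin d) : faceNormal I σ i = if i ∈ I then σ i else 0 := rfl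

theorem inner_faceNormal (x : EuclideanSpace ℝ (Fin d)) :
    ⟪faceNormal I σ, x⟫ = ∑ i ∈ I, σ i * x i := by
  simp only [inner_eq_sum, faceNormal_apply, ite_mul, zero_mul, Finset.sum_ite_mem,
    Finset.univ_inter]

variable (hσ : ∀ i ∈ I, |σ i| = 1)
include hσ

theorem abs_faceNormal_le_one (i : Fin d) : |faceNormal I σ i| ≤ 1 := by
  rw [faceNormal_apply]
  split_ifs with hi
  exacts [(hσ i hi).le, by simp]

theorem sum_abs_faceNormal : ∑ i, |faceNormal I σ i| = I.card := by
  simp only [faceNormal_apply, apply_ite, abs_zero, Finset.sum_ite_mem, Finset.univ_inter]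
  rw [Finset.sum_congr rfl hσ, Finset.sum_const, nsmul_one]

theorem faceNormal_mem_cubeFace : faceNormal I σ ∈ cubeFace I σ :=
  ⟨abs_faceNormal_le_one hσ, fun _ hi => if_pos hi⟩

theorem inner_faceNormal_of_mem_cubeFace {x : EuclideanSpace ℝ (Fin d)} (hx : x ∈ cubeFace I σ) :
    ⟪faceNormal I σ, x⟫ = I.card := by
  rw [inner_faceNormal, Finset.sum_congr rfl fun i hi => by rw [hx.2 i hi, ← abs_mul_abs_self,
    hσ i hi, one_mul], Finset.sum_const, nsmul_one]

theorem simplexVertices_subset_smul_cross (k : ℝ) : simplexVertices k I σ ⊆ k • cross d := by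
  rintro _ ⟨i, hi, rfl⟩
  exact ⟨σ i • EuclideanSpace.single i 1, smul_single_mem_cross (hσ i hi).le i, smul_smul _ _ _⟩

theorem inner_faceNormal_of_mem_simplexVertices {k : ℝ} {p : EuclideanSpace ℝ (Fin d)}
    (hp : p ∈ simplexVertices k I σ) : ⟪faceNormal I σ, p⟫ = k := by
  obtain ⟨i, hi, rfl⟩ := hp
  rw [inner_smul_right, EuclideanSpace.inner_single_right, faceNormal_apply, if_pos hi]
  simp [mul_assoc, ← abs_mul_abs_self (σ i), hσ i hi]

theorem mem_cubeFace_of_le_inner {x : EuclideanSpace ℝ (Fin d)} (hx : x ∈ hcube d)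
    (hle : I.card ≤ ⟪faceNormal I σ, x⟫) : x ∈ cubeFace I σ := by
  refine ⟨hx, fun i hi => ?_⟩
  have h := mul_eq_abs_of_le_inner hx ((sum_abs_faceNormal hσ).trans_le hle) i
  rw [faceNormal_apply, if_pos hi, hσ i hi] at h
  have hsq : σ i * σ i = 1 := by rw [← abs_mul_abs_self, hσ i hi, one_mul]
  linear_combination σ i * h - x i * hsq

theorem smul_mem_convexHull_simplexVertices (k : ℝ) {c : EuclideanSpace ℝ (Fin d)}
    (hc : c ∈ cross d) (hle : 1 ≤ ⟪faceNormal I σ, c⟫) :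
    k • c ∈ convexHull ℝ (simplexVertices k I σ) := by
  set b := faceNormal I σ
  have hterm : ∀ i ∈ Finset.univ, b i * c i ≤ |c i| := fun i _ =>
    (mul_le_of_abs_le (abs_faceNormal_le_one hσ i)).trans_eq (one_mul _)
  rw [inner_eq_sum] at hle
  have hsum : ∑ i, |c i| = 1 := le_antisymm hc (hle.trans (Finset.sum_le_sum hterm))
  have hsign : ∀ i, b i * c i = |c i| := fun i => (Finset.sum_eq_sum_iff_of_le hterm).1
    (le_antisymm (Finset.sum_le_sum hterm) (hsum ▸ hle)) i (Finset.mem_univ i)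
  have hcoord : ∀ i, c i = b i * |c i| := by
    intro i
    by_cases hi : i ∈ I
    · rw [← hsign i, ← mul_assoc, faceNormal_apply, if_pos hi, ← abs_mul_abs_self, hσ i hi,
        one_mul, one_mul]
    · have h := hsign i
      rw [faceNormal_apply, if_neg hi, zero_mul] at h ⊢
      rw [← abs_eq_zero, h]
  have hsumI : ∑ i ∈ I, |c i| = 1 := by
    rw [← hsum]
    refine Finset.sum_subset (Finset.subset_univ I) fun i _ hi => ?_
    rw [hcoord i, faceNormal_apply, if_neg hi, zero_mul, abs_zero]
  have hk : k • c = ∑ i ∈ I, |c i| • ((k * σ i) • EuclideanSpace.single i (1 : ℝ)) := by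
    ext j
    simp only [WithLp.ofLp_smul, WithLp.ofLp_sum, Pi.smul_apply, Finset.sum_apply, smul_eq_mul,
      PiLp.single_apply, mul_ite, mul_one, mul_zero, Finset.sum_ite_eq]
    conv_lhs => rw [hcoord j, faceNormal_apply]
    split_ifs <;> ring
  rw [hk]
  exact (convex_convexHull ℝ _).sum_mem (fun i _ => abs_nonneg _) hsumI
    fun i hi => subset_convexHull ℝ _ ⟨i, hi, rfl⟩

theorem faceNormal_add_single_mem_cubeFace {j : Fin d} (hj : j ∉ I) :
    faceNormal I σ + EuclideanSpace.single j 1 ∈ cubeFace I σ := by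
  refine ⟨fun i => ?_, fun i hi => ?_⟩
  · by_cases hij : i = j
    · subst hij; simp [faceNormal_apply, hj]
    · simpa [PiLp.single_apply, hij] using abs_faceNormal_le_one hσ i
  · have hij : i ≠ j := ne_of_mem_of_not_mem hi hj
    simp [faceNormal_apply, hij, hi]

theorem inner_faceNormal_le_of_mem_union {k : ℕ} (hcard : I.card = k)
    {x : EuclideanSpace ℝ (Fin d)} (hx : x ∈ (k : ℝ) • cross d ∪ hcube d) :
    ⟪faceNormal I σ, x⟫ ≤ k := by
  rcases hx with ⟨c, hc, rfl⟩ | hx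
  · rw [inner_smul_right]
    exact mul_le_of_le_one_right k.cast_nonneg
      (inner_le_of_mem_cross zero_le_one (abs_faceNormal_le_one hσ) hc)
  · exact (inner_le_of_mem_hcube _ hx).trans_eq (by rw [sum_abs_faceNormal hσ, hcard])

theorem sep_inner_faceNormal_eq {k : ℕ} (hk : 0 < k) (hcard : I.card = k) :
    {x ∈ convexHull ℝ ((k : ℝ) • cross d ∪ hcube d) | ⟪faceNormal I σ, x⟫ = k} =
      convexHull ℝ (cubeFace I σ ∪ simplexVertices k I σ) := by
  have hlevel := sep_convexHull_union_eq (convex_cross.smul (k : ℝ)) convex_hcube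
    ⟨_, smul_mem_smul_set zero_mem_cross⟩ ⟨0, zero_mem_hcube⟩ (innerₛₗ ℝ (faceNormal I σ))
    (fun x hx => inner_faceNormal_le_of_mem_union hσ hcard hx)
  simp only [coe_innerₛₗ_apply] at hlevel
  rw [hlevel]
  refine Subset.antisymm ?_ (convexHull_mono ?_)
  · rw [← convexHull_convexHull_union_right]
    refine convexHull_mono ?_
    rintro x ⟨⟨c, hc, rfl⟩ | hx, hxk⟩
    · refine Or.inr (smul_mem_convexHull_simplexVertices hσ k hc ?_)
      rw [inner_smul_right] at hxk
      rw [mul_left_cancel₀ (Nat.cast_ne_zero.2 hk.ne') (hxk.trans (mul_one _).symm)]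
    · exact Or.inl (mem_cubeFace_of_le_inner hσ hx (by rw [hxk, hcard]))
  · rintro x (hx | hx)
    · exact ⟨Or.inr hx.1, by rw [inner_faceNormal_of_mem_cubeFace hσ hx, hcard]⟩
    · exact ⟨Or.inl (simplexVertices_subset_smul_cross hσ k hx),
        inner_faceNormal_of_mem_simplexVertices hσ hx⟩

theorem maximizers_faceNormal_eq {k : ℕ} (hk : 0 < k) (hcard : I.card = k) :
    {x ∈ convexHull ℝ ((k : ℝ) • cross d ∪ hcube d) |
        ∀ y ∈ convexHull ℝ ((k : ℝ) • cross d ∪ hcube d),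
          ⟪faceNormal I σ, y⟫ ≤ ⟪faceNormal I σ, x⟫} =
      convexHull ℝ (cubeFace I σ ∪ simplexVertices k I σ) := by
  have hb := faceNormal_mem_cubeFace hσ
  rw [sep_forall_le_eq_sep_eq (subset_convexHull ℝ _ (mem_union_right _ hb.1))
    (by rw [inner_faceNormal_of_mem_cubeFace hσ hb, hcard])
    fun y hy => convexHull_min (fun x hx => inner_faceNormal_le_of_mem_union hσ hcard hx)
      (convex_halfSpace_le (innerₛₗ ℝ (faceNormal I σ)).isLinear _) hy,
    sep_inner_faceNormal_eq hσ hk hcard]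

theorem finrank_vectorSpan_cubeFace_union {k : ℕ} (hk : 0 < k) (hcard : I.card = k) :
    finrank ℝ (vectorSpan ℝ (convexHull ℝ (cubeFace I σ ∪ simplexVertices k I σ))) = d - 1 := by
  rw [vectorSpan_convexHull]
  set b := faceNormal I σ
  have hbG := faceNormal_mem_cubeFace hσ
  obtain ⟨i₀, hi₀⟩ : I.Nonempty := Finset.card_pos.1 (hcard ▸ hk)
  have hb : b ≠ 0 := fun h => by
    have h₀ : σ i₀ = 0 := by simpa [b, faceNormal_apply, hi₀] using congrArg (· i₀) h
    simpa [h₀] using hσ i₀ hi₀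
  have hupper := finrank_vectorSpan_add_finrank_span_le
    (S := cubeFace I σ ∪ simplexVertices k I σ) (W := {b}) fun w hw => ⟨k, by
      rintro x (hx | hx) <;> rw [Set.mem_singleton_iff.1 hw]
      exacts [(inner_faceNormal_of_mem_cubeFace hσ hx).trans (by rw [hcard]),
        inner_faceNormal_of_mem_simplexVertices hσ hx]⟩
  set V := vectorSpan ℝ (cubeFace I σ ∪ simplexVertices k I σ)
  have htop : V ⊔ (ℝ ∙ b) = ⊤ := by
    refine Submodule.eq_top_of_forall_single_mem fun j => ?_
    by_cases hj : j ∈ I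
    · have hv : ((k : ℝ) * σ j) • EuclideanSpace.single j (1 : ℝ) ∈ simplexVertices k I σ :=
        ⟨j, hj, rfl⟩
      have hkσ : (k : ℝ) * σ j ≠ 0 := mul_ne_zero (Nat.cast_ne_zero.2 hk.ne')
        fun h => by simpa [h] using hσ j hj
      rw [← inv_smul_smul₀ hkσ (EuclideanSpace.single j (1 : ℝ)),
        ← sub_add_cancel (((k : ℝ) * σ j) • EuclideanSpace.single j (1 : ℝ)) b]
      exact Submodule.smul_mem _ _ (Submodule.add_mem_sup
        (vsub_mem_vectorSpan ℝ (mem_union_right _ hv) (mem_union_left _ hbG))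
        (Submodule.mem_span_singleton_self b))
    · refine Submodule.mem_sup_left ?_
      simpa using vsub_mem_vectorSpan ℝ
        (mem_union_left _ (faceNormal_add_single_mem_cubeFace hσ hj)) (mem_union_left _ hbG)
  have hlower := Submodule.finrank_add_le_finrank_add_finrank V (ℝ ∙ b)
  rw [htop, finrank_top, finrank_euclideanSpace_fin] at hlower
  rw [finrank_euclideanSpace_fin, finrank_span_singleton hb] at hupper
  rw [finrank_span_singleton hb] at hlower
  omega

end Facet

theorem exists_eq_smul_faceNormal {d k : ℕ} {u : EuclideanSpace ℝ (Fin d)} {A : ℝ} (hA : 0 < A)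
    (hsupp : ∀ i, u i ≠ 0 → |u i| = A) (hN : ∑ i, |u i| = k * A) :
    ∃ (I : Finset (Fin d)) (σ : Fin d → ℝ),
      (∀ i ∈ I, |σ i| = 1) ∧ I.card = k ∧ u = A • faceNormal I σ := by
  refine ⟨Finset.univ.filter (u · ≠ 0), fun i => u i / A, fun i hi => ?_, ?_, ?_⟩
  · rw [abs_div, abs_of_pos hA, hsupp i (Finset.mem_filter.1 hi).2, div_self hA.ne']
  · have hN' : ∑ i, |u i| = (Finset.univ.filter (u · ≠ 0)).card * A := by
      rw [← Finset.sum_filter_of_ne fun i _ h => abs_ne_zero.1 h,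
        Finset.sum_congr rfl fun i hi => hsupp i (Finset.mem_filter.1 hi).2, Finset.sum_const,
        nsmul_eq_mul]
    exact_mod_cast mul_right_cancel₀ hA.ne' (hN'.symm.trans hN)
  · ext i
    by_cases hi : u i = 0 <;> simp [faceNormal_apply, hi, mul_div_cancel₀ _ hA.ne']

section FacetNormal

variable {d k : ℕ} {u : EuclideanSpace ℝ (Fin d)} {i₀ : Fin d} {M : ℝ}
  (hi₀ : ∀ i, |u i| ≤ |u i₀|) (hu₀ : u i₀ ≠ 0)
include hi₀ hu₀

theorem finrank_vectorSpan_sep_add_two_le_of_sum_lt (hk : 0 < k) (hkd : k ≤ d)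
    (hkM : k * |u i₀| ≤ M)
    (hlt : ∑ i, |u i| < k * |u i₀|) :
    finrank ℝ (vectorSpan ℝ {x ∈ (k : ℝ) • cross d ∪ hcube d | ⟪u, x⟫ = M}) + 2 ≤ d := by
  obtain ⟨j, hj⟩ : ∃ j, |u j| < |u i₀| := by
    by_contra! h
    have hdN : (d : ℝ) * |u i₀| ≤ ∑ i, |u i| := by
      simpa using Finset.card_nsmul_le_sum Finset.univ (fun i => |u i|) _ fun i _ => h i
    have hkd' : (k : ℝ) * |u i₀| ≤ d * |u i₀| := by gcongr
    linarith
  have hi₀j : i₀ ≠ j := by rintro rfl; exact hj.false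
  refine finrank_vectorSpan_add_two_le hu₀ (w := EuclideanSpace.single j 1) (by simp)
    (by simp [hi₀j]) (fun x hx => hx.2) (b := 0) ?_
  rintro x ⟨hx | hx, hxM⟩
  · simp [EuclideanSpace.inner_single_left,
      eq_zero_of_mem_smul_cross (Nat.cast_pos.2 hk) hi₀ hx (hxM ▸ hkM) hj]
  · linarith [inner_le_of_mem_hcube u hx]

theorem finrank_vectorSpan_sep_add_two_le_of_lt_sum (hk : 1 ≤ k) (hNM : ∑ i, |u i| ≤ M)
    (hgt : k * |u i₀| < ∑ i, |u i|) :
    finrank ℝ (vectorSpan ℝ {x ∈ (k : ℝ) • cross d ∪ hcube d | ⟪u, x⟫ = M}) + 2 ≤ d := by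
  obtain ⟨j, hji₀, hj⟩ : ∃ j ≠ i₀, u j ≠ 0 := by
    by_contra! h
    have hN : ∑ i, |u i| = |u i₀| :=
      Finset.sum_eq_single i₀ (fun i _ hi => by simp [h i hi]) (by simp)
    have hA : |u i₀| ≤ k * |u i₀| := le_mul_of_one_le_left (abs_nonneg _) (Nat.one_le_cast.2 hk)
    linarith
  refine finrank_vectorSpan_add_two_le hu₀ (w := u j • EuclideanSpace.single j 1) (by simp [hj])
    (by simp [hji₀.symm]) (fun x hx => hx.2) (b := |u j|) ?_
  rintro x ⟨hx | hx, hxM⟩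
  · linarith [inner_le_of_mem_smul_cross k.cast_nonneg (abs_nonneg _) hi₀ hx]
  · simpa [inner_smul_left, EuclideanSpace.inner_single_left] using
      mul_eq_abs_of_le_inner hx (hxM ▸ hNM) j

theorem finrank_vectorSpan_sep_add_two_le_of_sum_eq (hk : 0 < k) (hkM : k * |u i₀| ≤ M)
    (hNM : ∑ i, |u i| ≤ M)
    (hN : ∑ i, |u i| = k * |u i₀|) {j : Fin d} (hj : u j ≠ 0) (hjA : |u j| ≠ |u i₀|) :
    finrank ℝ (vectorSpan ℝ {x ∈ (k : ℝ) • cross d ∪ hcube d | ⟪u, x⟫ = M}) + 2 ≤ d := by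
  have hjlt := (hi₀ j).lt_of_ne hjA
  obtain ⟨l, hlj, hl, hlA⟩ := exists_ne_ne_zero_ne_of_sum_eq_nat_mul hN (abs_pos.2 hj) hjlt
  have hllt := (hi₀ l).lt_of_ne hlA
  have hi₀j : i₀ ≠ j := by rintro rfl; exact hjlt.false
  have hi₀l : i₀ ≠ l := by rintro rfl; exact hllt.false
  -- `w` vanishes on the cross-polytope part (where `x j = x l = 0`) and on the cube part
  -- (where `u j * x j = |u j|` and `u l * x l = |u l|`)
  set w := (|u l| * u j) • EuclideanSpace.single j (1 : ℝ) -
    (|u j| * u l) • EuclideanSpace.single l (1 : ℝ)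
  have hw : ∀ x, ⟪w, x⟫ = |u l| * (u j * x j) - |u j| * (u l * x l) := fun x => by
    simp only [w, inner_sub_left, inner_smul_left, Real.ringHom_apply,
      EuclideanSpace.inner_single_left, one_mul]
    ring
  refine finrank_vectorSpan_add_two_le hu₀ (w := w) (fun h => ?_) (by simp [w, hi₀j, hi₀l])
    (fun x hx => hx.2) (b := 0) ?_
  · exact abs_ne_zero.1 hl (by simpa [w, hlj, hj] using congrArg (· j) h)
  rintro x ⟨hx | hx, hxM⟩
  · have hx0 {m : Fin d} (hm : |u m| < |u i₀|) : x m = 0 :=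
      eq_zero_of_mem_smul_cross (Nat.cast_pos.2 hk) hi₀ hx (hxM ▸ hkM) hm
    rw [hw, hx0 hjlt, hx0 hllt]
    ring
  · rw [hw, mul_eq_abs_of_le_inner hx (hxM ▸ hNM) j, mul_eq_abs_of_le_inner hx (hxM ▸ hNM) l]
    ring

theorem abs_eq_and_sum_eq_of_finrank_vectorSpan_sep (hk : 1 ≤ k) (hkd : k ≤ d)
    (hkM : k * |u i₀| ≤ M) (hNM : ∑ i, |u i| ≤ M)
    (hdim : d - 1 ≤ finrank ℝ (vectorSpan ℝ {x ∈ (k : ℝ) • cross d ∪ hcube d | ⟪u, x⟫ = M})) :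
    (∀ i, u i ≠ 0 → |u i| = |u i₀|) ∧ ∑ i, |u i| = k * |u i₀| := by
  by_contra hbad
  suffices finrank ℝ (vectorSpan ℝ {x ∈ (k : ℝ) • cross d ∪ hcube d | ⟪u, x⟫ = M}) + 2 ≤ d by
    omega
  rcases lt_trichotomy (∑ i, |u i|) (k * |u i₀|) with hlt | hN | hgt
  · exact finrank_vectorSpan_sep_add_two_le_of_sum_lt hi₀ hu₀ hk hkd hkM hlt
  · obtain ⟨j, hj, hjA⟩ : ∃ j, u j ≠ 0 ∧ |u j| ≠ |u i₀| := by
      by_contra! h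
      exact hbad ⟨h, hN⟩
    exact finrank_vectorSpan_sep_add_two_le_of_sum_eq hi₀ hu₀ hk hkM hNM hN hj hjA
  · exact finrank_vectorSpan_sep_add_two_le_of_lt_sum hi₀ hu₀ hk hNM hgt

end FacetNormal

theorem exists_eq_smul_faceNormal_of_facet {d k : ℕ} (hk : 1 ≤ k) (hkd : k ≤ d)
    {u : EuclideanSpace ℝ (Fin d)} {F : Set (EuclideanSpace ℝ (Fin d))}
    (hF : F = {x ∈ convexHull ℝ ((k : ℝ) • cross d ∪ hcube d) |
      ∀ y ∈ convexHull ℝ ((k : ℝ) • cross d ∪ hcube d), ⟪u, y⟫ ≤ ⟪u, x⟫})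
    (hne : F.Nonempty) (hdim : finrank ℝ (vectorSpan ℝ F) = d - 1) :
    ∃ (I : Finset (Fin d)) (σ : Fin d → ℝ),
      (∀ i ∈ I, |σ i| = 1) ∧ I.card = k ∧ ∃ A : ℝ, 0 < A ∧ u = A • faceNormal I σ := by
  subst hF
  obtain ⟨x₀, hx₀P, hx₀⟩ := hne
  have hgen : ∀ x ∈ (k : ℝ) • cross d ∪ hcube d, ⟪u, x⟫ ≤ ⟪u, x₀⟫ :=
    fun x hx => hx₀ x (subset_convexHull ℝ _ hx)
  have hlevel := sep_convexHull_union_eq (convex_cross.smul (k : ℝ)) convex_hcube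
    ⟨_, smul_mem_smul_set zero_mem_cross⟩ ⟨0, zero_mem_hcube⟩ (innerₛₗ ℝ u) hgen
  simp only [coe_innerₛₗ_apply] at hlevel
  rw [sep_forall_le_eq_sep_eq hx₀P rfl hx₀, hlevel, vectorSpan_convexHull] at hdim
  rcases eq_or_ne u 0 with rfl | hu
  · rw [finrank_vectorSpan_of_hcube_subset] at hdim
    · omega
    · exact fun x hx => ⟨mem_union_right _ hx, by simp⟩
  have : Nonempty (Fin d) := ⟨⟨0, by omega⟩⟩
  obtain ⟨i₀, hi₀⟩ := Finite.exists_max fun i => |u i|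
  have hu₀ : u i₀ ≠ 0 := fun h => hu (by ext i; simpa [h] using hi₀ i)
  have hkM : k * |u i₀| ≤ ⟪u, x₀⟫ := by
    simpa [inner_smul_right, EuclideanSpace.inner_single_right] using hgen _
      (mem_union_left _ (smul_mem_smul_set (smul_single_mem_cross (abs_sign_le_one (u i₀)) i₀)))
  have hNM : ∑ i, |u i| ≤ ⟪u, x₀⟫ := by
    simpa [inner_eq_sum] using hgen (WithLp.toLp 2 fun i => (SignType.sign (u i) : ℝ))
      (Or.inr fun i => abs_sign_le_one _)
  obtain ⟨hsupp, hN⟩ :=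
    abs_eq_and_sum_eq_of_finrank_vectorSpan_sep hi₀ hu₀ hk hkd hkM hNM hdim.ge
  obtain ⟨I, σ, hσ, hcard, hu⟩ := exists_eq_smul_faceNormal (abs_pos.2 hu₀) hsupp hN
  exact ⟨I, σ, hσ, hcard, |u i₀|, abs_pos.2 hu₀, hu⟩

theorem facets_of_scaled_rho_int_general (d k : ℕ) (hk1 : 1 ≤ k) (hkd : k ≤ d)
    (F : Set (EuclideanSpace ℝ (Fin d))) :
    (IsExposed ℝ ((k : ℝ) • rho d (k : ℝ)) F ∧ F.Nonempty ∧
        Module.finrank ℝ (vectorSpan ℝ F) = d - 1) ↔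
      ∃ (I : Finset (Fin d)) (σ : Fin d → ℝ), I.card = k ∧
        (∀ i ∈ I, σ i = 1 ∨ σ i = -1) ∧
        F = convexHull ℝ
          ({x ∈ hcube d | ∀ i ∈ I, x i = σ i} ∪
            {p | ∃ i ∈ I, p = ((k : ℝ) * σ i) • EuclideanSpace.single i (1 : ℝ)}) := by
  rw [smul_rho (Nat.cast_ne_zero.2 (by omega))]
  constructor
  · rintro ⟨hexp, hne, hdim⟩
    obtain ⟨l, hl⟩ := hexp hne
    set u := (InnerProductSpace.toDual ℝ (EuclideanSpace ℝ (Fin d))).symm l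
    have hF : F = {x ∈ convexHull ℝ ((k : ℝ) • cross d ∪ hcube d) |
        ∀ y ∈ convexHull ℝ ((k : ℝ) • cross d ∪ hcube d), ⟪u, y⟫ ≤ ⟪u, x⟫} := by
      simpa only [u, InnerProductSpace.toDual_symm_apply] using hl
    obtain ⟨I, σ, hσ, hcard, A, hA, hu⟩ := exists_eq_smul_faceNormal_of_facet hk1 hkd hF hne hdim
    refine ⟨I, σ, hcard, fun i hi => (abs_eq zero_le_one).1 (hσ i hi), ?_⟩
    simp only [hF, hu, real_inner_smul_left, mul_le_mul_iff_of_pos_left hA]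
    exact maximizers_faceNormal_eq hσ hk1 hcard
  · rintro ⟨I, σ, hcard, hσ, rfl⟩
    have hσ' : ∀ i ∈ I, |σ i| = 1 := fun i hi => (abs_eq zero_le_one).2 (hσ i hi)
    refine ⟨fun _ => ⟨innerSL ℝ (faceNormal I σ), ?_⟩,
      ⟨_, subset_convexHull ℝ _ (Or.inl (faceNormal_mem_cubeFace hσ'))⟩,
      finrank_vectorSpan_cubeFace_union hσ' hk1 hcard⟩
    simp only [coe_innerSL_apply]
    exact (maximizers_faceNormal_eq hσ' hk1 hcard).symm

/-- For integer `k`, the facets of `k·ρ_{d,k}` are exactly the convex hulls of a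
`(d-k)`-dimensional face `G` of the hypercube `γ_d` together with the `(k-1)`-dimensional
regular simplex whose vertices are the `k` points `k σ_i e_i` pulled from the centers of
the `k` facets of `γ_d` incident to `G`. -/
theorem facets_of_scaled_rho_int (d k : ℕ) (hd : 1 ≤ d) (hk1 : 1 ≤ k) (hkd : k ≤ d)
    (F : Set (EuclideanSpace ℝ (Fin d))) :
    (IsExposed ℝ ((k : ℝ) • rho d (k : ℝ)) F ∧ F.Nonempty ∧
        Module.finrank ℝ (vectorSpan ℝ F) = d - 1) ↔
      ∃ (I : Finset (Fin d)) (σ : Fin d → ℝ), I.card = k ∧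
        (∀ i ∈ I, σ i = 1 ∨ σ i = -1) ∧
        F = convexHull ℝ
          ({x ∈ hcube d | ∀ i ∈ I, x i = σ i} ∪
            {p | ∃ i ∈ I, p = ((k : ℝ) * σ i) • EuclideanSpace.single i (1 : ℝ)}) :=
  facets_of_scaled_rho_int_general d k hk1 hkd F
end
end

section
/- Let d ≥ 1 and let k be an integer with 1 ≤ k ≤ d. The extreme points (vertices) of the polytope ρ*_{d,k} = (k β_d) ∩ γ_d are exactly the 2^k·binom(d,k) vectors in {−1,0,1}^d having exactly k non-zero coordinates. -/
/-!
An extreme point `x` of `ρ*_{d,k}` satisfies `∑ |x i| = k`: otherwise, since `k ≤ d`, some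
coordinate has `|x i| < 1` and can be moved in both directions. Two coordinates with
`0 < |x i| < 1` can exchange mass while keeping `∑ |x i|` fixed, and since `k` is an integer a
single such coordinate is impossible; so `x ∈ {-1, 0, 1}^d` with exactly `k` non-zero entries.
Conversely such an `x` is the unique maximiser of `⟪x, ·⟫` on `ρ*_{d,k}`, hence an exposed point.
Such vectors are counted by choosing the support, then a sign on each of its `k` coordinates.
-/

open scoped Pointwise

noncomputable section

/-- The polytope `ρ*_{d,k} = (k β_d) ∩ γ_d`. -/
def rhoStar (d : ℕ) (k : ℝ) : Set (EuclideanSpace ℝ (Fin d)) := (k • cross d) ∩ hcube d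

open Finset
open SignType (sign)

lemma mem_rhoStar_iff {d : ℕ} {k : ℝ} (hk : 0 ≤ k) {x : EuclideanSpace ℝ (Fin d)} :
    x ∈ rhoStar d k ↔ ∑ i, |x i| ≤ k ∧ ∀ i, |x i| ≤ 1 := by
  refine and_congr_left' ⟨?_, fun hx => ?_⟩
  · rintro ⟨y, hy, rfl⟩
    simp only [PiLp.smul_apply, smul_eq_mul, abs_mul, abs_of_nonneg hk, ← mul_sum]
    exact mul_le_of_le_one_right hk hy
  · rcases hk.eq_or_lt with rfl | hk
    · have hx0 : x = 0 := by
        ext i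
        exact abs_eq_zero.1 (le_antisymm ((single_le_sum (fun j _ => abs_nonneg (x j))
          (mem_univ i)).trans hx) (abs_nonneg _))
      exact ⟨0, by simp [cross], by simp [hx0]⟩
    · refine ⟨k⁻¹ • x, ?_, smul_inv_smul₀ hk.ne' x⟩
      show ∑ i, |(k⁻¹ • x) i| ≤ 1
      simp only [PiLp.smul_apply, smul_eq_mul, abs_mul,
        abs_of_pos (inv_pos.2 hk), ← mul_sum]
      exact inv_mul_le_one_of_le₀ hx hk.le

theorem eq_zero_of_mem_extremePoints_of_add_mem_of_sub_mem {𝕜 E : Type*} [Field 𝕜]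
    [LinearOrder 𝕜] [IsStrictOrderedRing 𝕜] [AddCommGroup E] [Module 𝕜 E] {A : Set E} {x v : E}
    (hx : x ∈ A.extremePoints 𝕜) (h₁ : x + v ∈ A) (h₂ : x - v ∈ A) : v = 0 := by
  have hseg : x ∈ openSegment 𝕜 (x + v) (x - v) :=
    ⟨1 / 2, 1 / 2, by norm_num, by norm_num, by norm_num, by module⟩
  simpa using hx.2 h₁ h₂ hseg

lemma abs_add_eq_abs_add_sign_mul {a b : ℝ} (h : |b| ≤ |a|) : |a + b| = |a| + sign a * b := by
  rcases lt_trichotomy a 0 with ha | rfl | ha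
  · rw [abs_of_neg ha] at h
    rw [abs_of_neg ha, sign_neg ha, SignType.coe_neg_one,
      abs_of_nonpos (by linarith [le_abs_self b])]
    ring
  · simpa using h
  · rw [abs_of_pos ha] at h
    rw [abs_of_pos ha, sign_pos ha, SignType.coe_one,
      abs_of_nonneg (by linarith [neg_abs_le b])]
    ring

lemma sum_abs_add_eq_of_abs_le {ι : Type*} [Fintype ι] {x v : ι → ℝ} (h : ∀ i, |v i| ≤ |x i|) :
    ∑ i, |x i + v i| = ∑ i, |x i| + ∑ i, sign (x i) * v i := by
  rw [← sum_add_distrib]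
  exact sum_congr rfl fun i _ => abs_add_eq_abs_add_sign_mul (h i)

lemma sum_abs_eq_card_filter_ne_zero {ι : Type*} (s : Finset ι) {x : ι → ℝ}
    (hx : ∀ i ∈ s, x i = -1 ∨ x i = 0 ∨ x i = 1) :
    ∑ i ∈ s, |x i| = #{i ∈ s | x i ≠ 0} := by
  classical
  rw [natCast_card_filter]
  refine sum_congr rfl fun i hi => ?_
  rcases hx i hi with h | h | h <;> norm_num [h]

lemma sum_abs_eq_ncard_support {ι : Type*} [Fintype ι] {x : ι → ℝ}
    (hx : ∀ i, x i = -1 ∨ x i = 0 ∨ x i = 1) : ∑ i, |x i| = {i | x i ≠ 0}.ncard := by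
  classical
  rw [sum_abs_eq_card_filter_ne_zero univ fun i _ => hx i, Set.ncard_eq_toFinset_card',
    Set.toFinset_ofPred]

section Perturbation

variable {d : ℕ} {k : ℝ} {x : EuclideanSpace ℝ (Fin d)}

lemma add_single_mem_rhoStar (hk : 0 ≤ k) (hx : x ∈ rhoStar d k) {i : Fin d} {c : ℝ}
    (hsum : ∑ j, |x j| + |c| ≤ k) (hi : |x i| + |c| ≤ 1) :
    x + EuclideanSpace.single i c ∈ rhoStar d k := by
  rw [mem_rhoStar_iff hk] at hx ⊢
  have hcoord : ∀ j, |(x + EuclideanSpace.single i c) j| ≤ |x j| + if j = i then |c| else 0 := by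
    intro j
    split_ifs with h
    · subst h
      simpa using abs_add_le (x j) c
    · simp [h]
  constructor
  · calc ∑ j, |(x + EuclideanSpace.single i c) j|
        ≤ ∑ j, (|x j| + if j = i then |c| else 0) := sum_le_sum fun j _ => hcoord j
      _ = ∑ j, |x j| + |c| := by simp [sum_add_distrib]
      _ ≤ k := hsum
  · intro j
    refine (hcoord j).trans ?_
    split_ifs with h
    · exact h ▸ hi
    · simpa using hx.2 j

lemma add_mem_rhoStar (hk : 0 ≤ k) (hx : x ∈ rhoStar d k) {v : EuclideanSpace ℝ (Fin d)}
    (hv : ∀ i, |v i| ≤ min |x i| (1 - |x i|)) (hsign : ∑ i, sign (x i) * v i = 0) :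
    x + v ∈ rhoStar d k := by
  rw [mem_rhoStar_iff hk] at hx ⊢
  refine ⟨?_, fun i => ?_⟩
  · simpa [sum_abs_add_eq_of_abs_le fun i => (hv i).trans (min_le_left _ _), hsign] using hx.1
  · have := (hv i).trans (min_le_right _ _)
    simpa using (abs_add_le (x i) (v i)).trans (by linarith)

lemma notMem_extremePoints_of_sum_lt (hk : 0 ≤ k) (hx : x ∈ rhoStar d k)
    (hsum : ∑ j, |x j| < k) {i : Fin d} (hi : |x i| < 1) :
    x ∉ (rhoStar d k).extremePoints ℝ := by
  intro hext
  set ε := min (k - ∑ j, |x j|) (1 - |x i|)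
  have hε : 0 < ε := lt_min (by linarith) (by linarith)
  have hmem : ∀ c, |c| = ε → x + EuclideanSpace.single i c ∈ rhoStar d k := fun c hc =>
    add_single_mem_rhoStar hk hx (by linarith [min_le_left (k - ∑ j, |x j|) (1 - |x i|)])
      (by linarith [min_le_right (k - ∑ j, |x j|) (1 - |x i|)])
  have h₂ : x - EuclideanSpace.single i ε ∈ rhoStar d k := by
    simpa [sub_eq_add_neg, PiLp.single_neg] using hmem (-ε) (by simp [abs_of_pos hε])
  have := eq_zero_of_mem_extremePoints_of_add_mem_of_sub_mem hext
    (hmem ε (abs_of_pos hε)) h₂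
  simp [hε.ne'] at this

lemma notMem_extremePoints_of_two_fractional (hk : 0 ≤ k) (hx : x ∈ rhoStar d k)
    {i j : Fin d} (hij : i ≠ j) (hi : 0 < |x i| ∧ |x i| < 1) (hj : 0 < |x j| ∧ |x j| < 1) :
    x ∉ (rhoStar d k).extremePoints ℝ := by
  intro hext
  set ε := min (min |x i| (1 - |x i|)) (min |x j| (1 - |x j|))
  have hε : 0 < ε := lt_min (lt_min hi.1 (by linarith)) (lt_min hj.1 (by linarith))
  have sign_mul_sign : ∀ t, x t ≠ 0 → (sign (x t) : ℝ) * sign (x t) = 1 := fun t ht => by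
    rw [← SignType.coe_mul, ← sign_mul, sign_pos (mul_self_pos.2 ht), SignType.coe_one]
  -- moving mass `ε` from coordinate `j` to coordinate `i` keeps `∑ |x t|` fixed
  set v := EuclideanSpace.single i (ε * sign (x i)) - EuclideanSpace.single j (ε * sign (x j))
  have hv : ∀ t, |v t| ≤ min |x t| (1 - |x t|) := by
    intro t
    have habs : ∀ a : ℝ, |ε * sign a| ≤ ε := fun a => by
      cases h : sign a <;> simp [abs_of_pos hε, hε.le]
    by_cases hti : t = i
    · subst hti
      simpa [v, hij] using (habs (x t)).trans (min_le_left _ _)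
    by_cases htj : t = j
    · subst htj
      simpa [v, hti] using (habs (x t)).trans (min_le_right _ _)
    · simpa [v, hti, htj] using ((mem_rhoStar_iff hk).1 hx).2 t
  have hsign : ∑ t, sign (x t) * v t = 0 := by
    simp [v, mul_sub, sum_sub_distrib, mul_left_comm _ ε,
      sign_mul_sign i (abs_pos.1 hi.1), sign_mul_sign j (abs_pos.1 hj.1)]
  have h₂ : x - v ∈ rhoStar d k := by
    simpa [sub_eq_add_neg] using
      add_mem_rhoStar hk hx (v := -v) (by simpa using hv) (by simpa using hsign)
  have hv0 := eq_zero_of_mem_extremePoints_of_add_mem_of_sub_mem hext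
    (add_mem_rhoStar hk hx hv hsign) h₂
  have hvi : v i = ε * sign (x i) := by simp [v, hij]
  simp only [hv0, PiLp.zero_apply, zero_eq_mul, hε.ne', false_or] at hvi
  simpa [hvi] using sign_mul_sign i (abs_pos.1 hi.1)

end Perturbation

lemma exists_ne_fractional_of_sum_abs_eq_natCast {ι : Type*} [Fintype ι] [DecidableEq ι]
    {x : ι → ℝ} {k : ℕ} (hsum : ∑ i, |x i| = k) (hx : ∀ i, |x i| ≤ 1) {i : ι}
    (hi : 0 < |x i| ∧ |x i| < 1) : ∃ j ≠ i, 0 < |x j| ∧ |x j| < 1 := by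
  by_contra! h
  have hvals : ∀ j ∈ univ.erase i, x j = -1 ∨ x j = 0 ∨ x j = 1 := by
    intro j hj
    rcases (abs_nonneg (x j)).eq_or_lt with h0 | h0
    · exact Or.inr (Or.inl (abs_eq_zero.1 h0.symm))
    · rcases abs_eq zero_le_one |>.1 ((hx j).antisymm (h j (ne_of_mem_erase hj) h0)) with h1 | h1
      · exact Or.inr (Or.inr h1)
      · exact Or.inl h1
  -- `|x i|` would be the difference of two natural numbers lying strictly between `0` and `1`
  have hm := add_sum_erase univ (fun j => |x j|) (mem_univ i)
  rw [sum_abs_eq_card_filter_ne_zero _ hvals, hsum] at hm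
  set m := #{j ∈ univ.erase i | x j ≠ 0}
  have hlt : m < k := by exact_mod_cast (by linarith : (m : ℝ) < k)
  have : (m + 1 : ℝ) ≤ k := by exact_mod_cast hlt
  linarith

lemma signVector_of_mem_extremePoints_rhoStar {d k : ℕ} (hkd : k ≤ d)
    {x : EuclideanSpace ℝ (Fin d)} (hx : x ∈ (rhoStar d k).extremePoints ℝ) :
    (∀ i, x i = -1 ∨ x i = 0 ∨ x i = 1) ∧ ∑ i, |x i| = k := by
  have hk : (0 : ℝ) ≤ k := k.cast_nonneg
  obtain ⟨hsum, hcube⟩ := (mem_rhoStar_iff hk).1 hx.1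
  have hsum_eq : ∑ i, |x i| = k := by
    refine hsum.antisymm (not_lt.1 fun hlt => ?_)
    obtain ⟨i, hi⟩ : ∃ i, |x i| < 1 := by
      by_contra! h
      have : (d : ℝ) ≤ ∑ i, |x i| := by simpa using sum_le_sum fun i (_ : i ∈ univ) => h i
      linarith [(Nat.cast_le (α := ℝ)).2 hkd]
    exact notMem_extremePoints_of_sum_lt hk hx.1 hlt hi hx
  refine ⟨fun i => ?_, hsum_eq⟩
  by_contra! h
  have hi : 0 < |x i| ∧ |x i| < 1 := by
    refine ⟨abs_pos.2 h.2.1, (hcube i).lt_of_ne fun h1 => ?_⟩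
    rcases abs_eq zero_le_one |>.1 h1 with h1 | h1
    exacts [h.2.2 h1, h.1 h1]
  obtain ⟨j, hji, hj⟩ := exists_ne_fractional_of_sum_abs_eq_natCast hsum_eq hcube hi
  exact notMem_extremePoints_of_two_fractional hk hx.1 hji.symm hi hj hx

lemma mem_exposedPoints_rhoStar {d : ℕ} {k : ℝ} {x : EuclideanSpace ℝ (Fin d)}
    (hvals : ∀ i, x i = -1 ∨ x i = 0 ∨ x i = 1) (hsum : ∑ i, |x i| = k) :
    x ∈ (rhoStar d k).exposedPoints ℝ := by
  have hk : 0 ≤ k := hsum ▸ sum_nonneg fun i _ => abs_nonneg (x i)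
  have hcube : ∀ i, |x i| ≤ 1 := fun i => by rcases hvals i with h | h | h <;> simp [h]
  have hl : ∀ y, innerSL ℝ x y = ∑ i, x i * y i := fun y => by
    simp [PiLp.inner_apply, mul_comm]
  have hxx : innerSL ℝ x x = k := by
    rw [hl, ← hsum]
    exact sum_congr rfl fun i _ => by rcases hvals i with h | h | h <;> simp [h]
  refine ⟨(mem_rhoStar_iff hk).2 ⟨hsum.le, hcube⟩, innerSL ℝ x, fun y hy => ?_⟩
  obtain ⟨hysum, hycube⟩ := (mem_rhoStar_iff hk).1 hy
  have le_abs_x : ∀ i ∈ univ, x i * y i ≤ |x i| := fun i _ =>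
    (le_abs_self _).trans (by rw [abs_mul]; exact mul_le_of_le_one_right (abs_nonneg _) (hycube i))
  have le_abs_y : ∀ i ∈ univ, x i * y i ≤ |y i| := fun i _ =>
    (le_abs_self _).trans (by rw [abs_mul]; exact mul_le_of_le_one_left (abs_nonneg _) (hcube i))
  rw [hxx, hl]
  refine ⟨(sum_le_sum le_abs_x).trans hsum.le, fun hge => ?_⟩
  have hx' := (sum_eq_sum_iff_of_le le_abs_x).1 (le_antisymm (sum_le_sum le_abs_x) (hsum ▸ hge))
  have hy' := (sum_eq_sum_iff_of_le le_abs_y).1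
    (le_antisymm (sum_le_sum le_abs_y) (hysum.trans hge))
  ext i
  have h₁ := hx' i (mem_univ i)
  have h₂ := hy' i (mem_univ i)
  rcases hvals i with h | h | h <;> rw [h] at h₁ h₂ ⊢ <;> norm_num at h₁ h₂
  · linarith
  · exact abs_eq_zero.1 h₂.symm
  · exact h₁

theorem ncard_signVectors (ι : Type*) [Fintype ι] (k : ℕ) :
    {x : ι → ℝ | (∀ i, x i = -1 ∨ x i = 0 ∨ x i = 1) ∧ {i | x i ≠ 0}.ncard = k}.ncard =
      2 ^ k * (Fintype.card ι).choose k := by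
  classical
  let signVectorsOn (s : Finset ι) : Finset (ι → ℝ) :=
    Fintype.piFinset fun i => if i ∈ s then {-1, 1} else {0}
  have mem_signVectorsOn : ∀ s x, x ∈ signVectorsOn s ↔
      (∀ i, x i = -1 ∨ x i = 0 ∨ x i = 1) ∧ {i | x i ≠ 0} = ↑s := by
    intro s x
    simp only [signVectorsOn, Fintype.mem_piFinset, Set.ext_iff, ← forall_and]
    refine forall_congr' fun i => ?_
    by_cases hi : i ∈ s <;> rcases eq_or_ne (x i) 0 with h | h <;> simp [hi, h]
  have hS : {x : ι → ℝ | (∀ i, x i = -1 ∨ x i = 0 ∨ x i = 1) ∧ {i | x i ≠ 0}.ncard = k} =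
      ↑((powersetCard k univ).biUnion signVectorsOn) := by
    ext x
    simp only [Set.mem_ofPred_eq, coe_biUnion, mem_coe, mem_powersetCard_univ, Set.mem_iUnion,
      mem_signVectorsOn, exists_prop]
    constructor
    · rintro ⟨hvals, hcard⟩
      exact ⟨_, by rw [← hcard, Set.ncard_eq_toFinset_card'], hvals, (Set.coe_toFinset _).symm⟩
    · rintro ⟨s, rfl, hvals, hsupp⟩
      exact ⟨hvals, by rw [hsupp, Set.ncard_coe_finset]⟩
  rw [hS, Set.ncard_coe_finset, card_biUnion, sum_congr rfl fun s hs => ?_, sum_const,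
    card_powersetCard, card_univ, smul_eq_mul, mul_comm]
  · rw [Fintype.card_piFinset]
    simp [apply_ite, prod_ite_mem, mem_powersetCard_univ.1 hs,
      card_pair (by norm_num : (-1 : ℝ) ≠ 1)]
  · intro s _ t _ hst
    refine disjoint_left.2 fun x hxs hxt => hst ?_
    exact coe_injective
      (((mem_signVectorsOn s x).1 hxs).2.symm.trans ((mem_signVectorsOn t x).1 hxt).2)

theorem extremePoints_rhoStar_general (d k : ℕ) (hkd : k ≤ d) :
    Set.extremePoints ℝ (rhoStar d (k : ℝ)) =
      {x : EuclideanSpace ℝ (Fin d) |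
        (∀ i, x i = -1 ∨ x i = 0 ∨ x i = 1) ∧ {i | x i ≠ 0}.ncard = k} ∧
    {x : EuclideanSpace ℝ (Fin d) |
        (∀ i, x i = -1 ∨ x i = 0 ∨ x i = 1) ∧ {i | x i ≠ 0}.ncard = k}.ncard =
      2 ^ k * d.choose k := by
  refine ⟨Set.ext fun x => ⟨fun hx => ?_, fun ⟨hvals, hcard⟩ => ?_⟩, ?_⟩
  · obtain ⟨hvals, hsum⟩ := signVector_of_mem_extremePoints_rhoStar hkd hx
    exact ⟨hvals, Nat.cast_inj.1 ((sum_abs_eq_ncard_support hvals).symm.trans hsum)⟩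
  · exact exposedPoints_subset_extremePoints
      (mem_exposedPoints_rhoStar hvals (by rw [sum_abs_eq_ncard_support hvals, hcard]))
  · calc _ = {f : Fin d → ℝ |
          (∀ i, f i = -1 ∨ f i = 0 ∨ f i = 1) ∧ {i | f i ≠ 0}.ncard = k}.ncard :=
          Set.ncard_preimage_of_injective_subset_range (WithLp.ofLp_injective 2)
            (by simp [(WithLp.ofLp_surjective 2).range_eq])
      _ = 2 ^ k * d.choose k := by simpa using ncard_signVectors (Fin d) k

/-- For integer `k` with `1 ≤ k ≤ d`, the vertices (extreme points) of `ρ*_{d,k}` are exactly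
the `2^k · binom(d,k)` vectors in `{-1,0,1}^d` with exactly `k` non-zero coordinates. -/
theorem extremePoints_rhoStar (d k : ℕ) (hd : 1 ≤ d) (hk1 : 1 ≤ k) (hkd : k ≤ d) :
    Set.extremePoints ℝ (rhoStar d (k : ℝ)) =
      {x : EuclideanSpace ℝ (Fin d) |
        (∀ i, x i = -1 ∨ x i = 0 ∨ x i = 1) ∧ {i | x i ≠ 0}.ncard = k} ∧
    {x : EuclideanSpace ℝ (Fin d) |
        (∀ i, x i = -1 ∨ x i = 0 ∨ x i = 1) ∧ {i | x i ≠ 0}.ncard = k}.ncard =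
      2 ^ k * d.choose k :=
  extremePoints_rhoStar_general d k hkd
end
end
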